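/- arXiv:1903.03580 — 2 statements merged into one kernel-verified Lean document; each statement's English description precedes it below -/
import Mathlib

section
/- Let β ≥ γ ≥ 0 with β + γ > 1. Then there exists a constant C = C(β,γ) > 0 such that for all k₁, k₂ ∈ ℝ, ∫_ℝ ⟨τ − k₁⟩^{−β} ⟨τ − k₂⟩^{−γ} dτ ≤ C ⟨k₁ − k₂⟩^{−γ} φ_β(k₁ − k₂), where φ_β(k) = 1 if β > 1, φ_β(k) = log(1 + ⟨k⟩) if β = 1, and φ_β(k) = ⟨k⟩^{1−β} if β < 1. -/
/-!
Write `a = ⟨k⟩` and split the line at `|τ| = 2|k| + 1`. Since `⟨k⟩ ≤ ⟨τ⟩ + ⟨τ - k⟩`, the larger of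
the two brackets is at least `a / 2`; as `β ≥ γ`, the exponent `γ` may be moved onto the larger
bracket and `β` onto the smaller one, so near the origin the integrand is at most
`2^γ a^{-γ} (⟨τ⟩^{-β} + ⟨τ - k⟩^{-β})`, and `∫_{|x| ≤ 3|k|+1} ⟨x⟩^{-β} ≲ φ_β(k)` by comparison with
`∫_1^{5a} y^{-β} dy`. Far from the origin `⟨τ⟩ ≤ 2⟨τ - k⟩`, so the integrand is at most
`2^γ ⟨τ⟩^{-(β+γ)}`, whose tail integral is `≲ a^{1-β-γ} = a^{-γ} a^{1-β} ≲ a^{-γ} φ_β(k)`.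
-/

open MeasureTheory Real
open scoped ENNReal

/-- Japanese bracket `⟨x⟩ = (1 + x²)^{1/2}`. -/
noncomputable def jap (x : ℝ) : ℝ := Real.sqrt (1 + x ^ 2)

/-- The function `φ_β` from the calculus lemma. -/
noncomputable def phiβ (β k : ℝ) : ℝ :=
  if 1 < β then 1
  else if β = 1 then Real.log (1 + jap k)
  else jap k ^ (1 - β)

open Set

lemma one_le_jap (x : ℝ) : 1 ≤ jap x :=
  Real.one_le_sqrt.mpr (by nlinarith)

lemma jap_pos (x : ℝ) : 0 < jap x := one_pos.trans_le (one_le_jap x)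

lemma abs_le_jap (x : ℝ) : |x| ≤ jap x :=
  Real.abs_le_sqrt (by nlinarith)

lemma jap_le_one_add_abs (x : ℝ) : jap x ≤ 1 + |x| :=
  Real.sqrt_le_iff.mpr ⟨by positivity, by nlinarith [sq_abs x, abs_nonneg x]⟩

lemma one_add_abs_le_two_mul_jap (x : ℝ) : 1 + |x| ≤ 2 * jap x := by
  linarith [one_le_jap x, abs_le_jap x]

lemma jap_add_le (x y : ℝ) : jap (x + y) ≤ jap x + |y| := by
  have hx : |x| ≤ jap x := abs_le_jap x
  have hsq : jap x ^ 2 = 1 + x ^ 2 := Real.sq_sqrt (by positivity)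
  refine Real.sqrt_le_iff.mpr ⟨add_nonneg (jap_pos x).le (abs_nonneg y), ?_⟩
  nlinarith [sq_abs y, le_abs_self (x * y), abs_mul x y,
    mul_le_mul_of_nonneg_right hx (abs_nonneg y)]

lemma jap_le_jap_add_jap_sub (τ k : ℝ) : jap k ≤ jap τ + jap (τ - k) := by
  calc jap k = jap (τ + -(τ - k)) := by ring_nf
    _ ≤ jap τ + |τ - k| := by rw [← abs_neg (τ - k)]; exact jap_add_le _ _
    _ ≤ jap τ + jap (τ - k) := by gcongr; exact abs_le_jap _

lemma jap_le_two_mul_jap_sub {τ k : ℝ} (h : 2 * |k| ≤ |τ|) : jap τ ≤ 2 * jap (τ - k) := by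
  have hk : |k| ≤ |τ - k| := by linarith [abs_sub_abs_le_abs_sub τ k]
  calc jap τ = jap (τ - k + k) := by ring_nf
    _ ≤ jap (τ - k) + |k| := jap_add_le _ _
    _ ≤ 2 * jap (τ - k) := by linarith [abs_le_jap (τ - k)]

@[simp] lemma jap_neg (x : ℝ) : jap (-x) = jap x := by simp [jap]

lemma continuous_jap : Continuous jap := by unfold jap; fun_prop

lemma phiβ_of_one_lt {β : ℝ} (h : 1 < β) (k : ℝ) : phiβ β k = 1 := if_pos h

lemma phiβ_one (k : ℝ) : phiβ 1 k = log (1 + jap k) := by simp [phiβ]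

lemma phiβ_of_lt_one {β : ℝ} (h : β < 1) (k : ℝ) : phiβ β k = jap k ^ (1 - β) := by
  simp [phiβ, h.not_gt, h.ne]

lemma phiβ_neg (β k : ℝ) : phiβ β (-k) = phiβ β k := by simp [phiβ]

lemma log_two_le_log_one_add_jap (k : ℝ) : log 2 ≤ log (1 + jap k) :=
  log_le_log two_pos (by linarith [one_le_jap k])

lemma phiβ_pos (β k : ℝ) : 0 < phiβ β k := by
  rcases lt_trichotomy β 1 with h | rfl | h
  · rw [phiβ_of_lt_one h]; exact rpow_pos_of_pos (jap_pos k) _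
  · rw [phiβ_one]; exact (log_pos one_lt_two).trans_le (log_two_le_log_one_add_jap k)
  · rw [phiβ_of_one_lt h]; exact one_pos

lemma rpow_neg_le_two_rpow_mul {a v γ : ℝ} (hγ : 0 ≤ γ) (ha : 0 < a) (hav : a ≤ 2 * v) :
    v ^ (-γ) ≤ 2 ^ γ * a ^ (-γ) := by
  calc v ^ (-γ) ≤ (a / 2) ^ (-γ) := rpow_le_rpow_of_nonpos (by positivity) (by linarith)
        (by linarith)
    _ = 2 ^ γ * a ^ (-γ) := by
        rw [div_rpow ha.le zero_le_two, rpow_neg ha.le, rpow_neg zero_le_two]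
        field_simp

lemma rpow_neg_mul_rpow_neg_le_of_le {u v β γ : ℝ} (hβγ : γ ≤ β) (hv : 0 < v) (hvu : v ≤ u) :
    u ^ (-β) * v ^ (-γ) ≤ u ^ (-γ) * v ^ (-β) := by
  have hu : 0 < u := hv.trans_le hvu
  have hgap : u ^ (γ - β) ≤ v ^ (γ - β) := rpow_le_rpow_of_nonpos hv hvu (by linarith)
  calc u ^ (-β) * v ^ (-γ) = u ^ (γ - β) * (u ^ (-γ) * v ^ (-γ)) := by
        rw [← mul_assoc, ← rpow_add hu]; ring_nf
    _ ≤ v ^ (γ - β) * (u ^ (-γ) * v ^ (-γ)) := by gcongr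
    _ = u ^ (-γ) * v ^ (-β) := by
        rw [mul_left_comm, ← rpow_add hv]; ring_nf

lemma rpow_neg_mul_rpow_neg_le {a u v β γ : ℝ} (hγ : 0 ≤ γ) (hβγ : γ ≤ β) (ha : 0 < a)
    (hu : 0 < u) (hv : 0 < v) (hauv : a ≤ u + v) :
    u ^ (-β) * v ^ (-γ) ≤ 2 ^ γ * a ^ (-γ) * (u ^ (-β) + v ^ (-β)) := by
  have hu' := rpow_nonneg hu.le (-β)
  have hv' := rpow_nonneg hv.le (-β)
  rcases le_total u v with huv | hvu
  · calc u ^ (-β) * v ^ (-γ) ≤ u ^ (-β) * (2 ^ γ * a ^ (-γ)) := by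
          gcongr; exact rpow_neg_le_two_rpow_mul hγ ha (by linarith)
      _ ≤ 2 ^ γ * a ^ (-γ) * (u ^ (-β) + v ^ (-β)) := by
          rw [mul_comm]; gcongr; linarith
  · calc u ^ (-β) * v ^ (-γ) ≤ u ^ (-γ) * v ^ (-β) := rpow_neg_mul_rpow_neg_le_of_le hβγ hv hvu
      _ ≤ 2 ^ γ * a ^ (-γ) * v ^ (-β) := by
          gcongr; exact rpow_neg_le_two_rpow_mul hγ ha (by linarith)
      _ ≤ 2 ^ γ * a ^ (-γ) * (u ^ (-β) + v ^ (-β)) := by gcongr; linarith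

lemma integral_one_rpow_neg {p M : ℝ} (hp : p ≠ 1) (hM : 0 < M) :
    ∫ y in (1:ℝ)..M, y ^ (-p) = (M ^ (1 - p) - 1) / (1 - p) := by
  have h0 : (0:ℝ) ∉ uIcc 1 M := fun h => by
    rcases mem_uIcc.mp h with h | h <;> linarith [h.1, h.2]
  rw [integral_rpow (Or.inr ⟨fun h => hp (by linarith), h0⟩), one_rpow]
  ring_nf

lemma integral_one_rpow_neg_le_phiβ (p : ℝ) :
    ∃ C > 0, ∀ k M : ℝ, 1 ≤ M → M ≤ 5 * jap k → ∫ y in (1:ℝ)..M, y ^ (-p) ≤ C * phiβ p k := by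
  rcases lt_trichotomy p 1 with hp | rfl | hp
  · refine ⟨5 ^ (1 - p) / (1 - p), div_pos (by positivity) (by linarith), fun k M hM hMk => ?_⟩
    rw [integral_one_rpow_neg hp.ne (by linarith), phiβ_of_lt_one hp]
    have hMp : M ^ (1 - p) ≤ 5 ^ (1 - p) * jap k ^ (1 - p) := by
      rw [← mul_rpow (by norm_num) (jap_pos k).le]
      exact rpow_le_rpow (by linarith) hMk (by linarith)
    rw [div_mul_eq_mul_div]
    gcongr
    linarith
  · refine ⟨log 5 / log 2 + 1, by positivity, fun k M hM hMk => ?_⟩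
    have hlog2 := log_two_le_log_one_add_jap k
    have hlog5 : log 5 ≤ log 5 / log 2 * log (1 + jap k) := by
      rw [div_mul_eq_mul_div, le_div_iff₀ (log_pos one_lt_two)]
      exact mul_le_mul_of_nonneg_left hlog2 (log_nonneg (by norm_num))
    have hlogM : log M ≤ log 5 + log (1 + jap k) := by
      rw [← log_mul (by norm_num) (by linarith [one_le_jap k])]
      exact log_le_log (by linarith) (by linarith)
    simp only [rpow_neg_one]
    rw [integral_inv_of_pos one_pos (by linarith), div_one, phiβ_one]
    linarith
  · refine ⟨1 / (p - 1), one_div_pos.mpr (by linarith), fun k M hM hMk => ?_⟩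
    rw [integral_one_rpow_neg hp.ne' (by linarith), phiβ_of_one_lt hp, mul_one,
      ← neg_div_neg_eq, neg_sub, neg_sub]
    gcongr
    linarith [rpow_nonneg (by linarith : (0:ℝ) ≤ M) (1 - p)]

lemma jap_rpow_one_sub_le_phiβ (β : ℝ) : ∃ C > 0, ∀ k, jap k ^ (1 - β) ≤ C * phiβ β k := by
  rcases lt_trichotomy β 1 with hβ | rfl | hβ
  · exact ⟨1, one_pos, fun k => by rw [phiβ_of_lt_one hβ, one_mul]⟩
  · refine ⟨1 / log 2, by positivity, fun k => ?_⟩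
    rw [sub_self, rpow_zero, phiβ_one, div_mul_eq_mul_div, one_mul,
      le_div_iff₀ (log_pos one_lt_two), one_mul]
    exact log_two_le_log_one_add_jap k
  · refine ⟨1, one_pos, fun k => ?_⟩
    rw [phiβ_of_one_lt hβ, one_mul]
    exact rpow_le_one_of_one_le_of_nonpos (one_le_jap k) (by linarith)

lemma setLIntegral_preimage_abs_le {f : ℝ → ℝ≥0∞} (hf : ∀ x, f (-x) = f x) (s : Set ℝ) :
    ∫⁻ x in (fun x => |x|) ⁻¹' s, f x ≤ 2 * ∫⁻ x in s, f x := by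
  have hsub : (fun x => |x|) ⁻¹' s ⊆ s ∪ (fun x => -x) ⁻¹' s := by
    intro x hx
    rcases abs_choice x with h | h
    · exact Or.inl (by simpa [h] using hx)
    · exact Or.inr (by simpa [h] using hx)
  have hneg : ∫⁻ x in (fun x => -x) ⁻¹' s, f x = ∫⁻ x in s, f x := by
    have := (Measure.measurePreserving_neg volume).setLIntegral_comp_preimage_emb
      (MeasurableEquiv.neg ℝ).measurableEmbedding f s
    simpa only [hf] using this
  calc ∫⁻ x in (fun x => |x|) ⁻¹' s, f x ≤ ∫⁻ x in s ∪ (fun x => -x) ⁻¹' s, f x :=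
        lintegral_mono_set hsub
    _ ≤ (∫⁻ x in s, f x) + ∫⁻ x in (fun x => -x) ⁻¹' s, f x := lintegral_union_le _ _ _
    _ = 2 * ∫⁻ x in s, f x := by rw [hneg, two_mul]

lemma setLIntegral_Icc_jap_rpow_neg_le {p R : ℝ} (hp : 0 ≤ p) (hR : 0 ≤ R) :
    ∫⁻ x in Icc 0 R, ENNReal.ofReal (jap x ^ (-p)) ≤
      ENNReal.ofReal (2 ^ p * ∫ y in (1:ℝ)..(1 + R), y ^ (-p)) := by
  have hcont : ContinuousOn (fun x : ℝ => 2 ^ p * (1 + x) ^ (-p)) (Icc 0 R) :=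
    continuousOn_const.mul (continuousOn_const.add continuousOn_id |>.rpow_const
      fun x hx => Or.inl (ne_of_gt (show 0 < 1 + x by linarith [hx.1])))
  calc ∫⁻ x in Icc 0 R, ENNReal.ofReal (jap x ^ (-p))
      ≤ ∫⁻ x in Icc 0 R, ENNReal.ofReal (2 ^ p * (1 + x) ^ (-p)) := by
        refine setLIntegral_mono' measurableSet_Icc fun x hx => ENNReal.ofReal_le_ofReal ?_
        have h := one_add_abs_le_two_mul_jap x
        rw [abs_of_nonneg hx.1] at h
        exact rpow_neg_le_two_rpow_mul hp (by linarith [hx.1]) h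
    _ = ENNReal.ofReal (∫ x in Icc 0 R, 2 ^ p * (1 + x) ^ (-p)) :=
        (ofReal_integral_eq_lintegral_ofReal hcont.integrableOn_Icc
          ((ae_restrict_iff' measurableSet_Icc).mpr (ae_of_all _ fun x hx =>
            by have := hx.1; positivity))).symm
    _ = ENNReal.ofReal (2 ^ p * ∫ y in (1:ℝ)..(1 + R), y ^ (-p)) := by
        rw [integral_Icc_eq_integral_Ioc, ← intervalIntegral.integral_of_le hR,
          intervalIntegral.integral_const_mul,
          intervalIntegral.integral_comp_add_left (fun y => y ^ (-p)), add_zero]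

lemma setLIntegral_Ioi_jap_rpow_neg_le {p R : ℝ} (hp : 1 < p) (hR : 0 < R) :
    ∫⁻ x in Ioi R, ENNReal.ofReal (jap x ^ (-p)) ≤ ENNReal.ofReal (R ^ (1 - p) / (p - 1)) := by
  calc ∫⁻ x in Ioi R, ENNReal.ofReal (jap x ^ (-p))
      ≤ ∫⁻ x in Ioi R, ENNReal.ofReal (x ^ (-p)) :=
        setLIntegral_mono' measurableSet_Ioi fun x hx => ENNReal.ofReal_le_ofReal <|
          rpow_le_rpow_of_nonpos (hR.trans hx) ((le_abs_self x).trans (abs_le_jap x))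
            (by linarith)
    _ = ENNReal.ofReal (R ^ (1 - p) / (p - 1)) := by
        rw [← ofReal_integral_eq_lintegral_ofReal (integrableOn_Ioi_rpow_of_lt (by linarith) hR)
          ((ae_restrict_iff' measurableSet_Ioi).mpr (ae_of_all _ fun x hx =>
            rpow_nonneg (hR.trans hx).le _)),
          integral_Ioi_rpow_of_lt (by linarith) hR, ← neg_div_neg_eq]
        ring_nf

lemma setLIntegral_abs_le_jap_rpow_neg_le_phiβ {p : ℝ} (hp : 0 ≤ p) :
    ∃ C > 0, ∀ k R : ℝ, R ≤ 3 * |k| + 1 →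
      ∫⁻ x in {x | |x| ≤ R}, ENNReal.ofReal (jap x ^ (-p)) ≤ ENNReal.ofReal (C * phiβ p k) := by
  obtain ⟨C, hC, hint⟩ := integral_one_rpow_neg_le_phiβ p
  refine ⟨2 * 2 ^ p * C, by positivity, fun k R hR => ?_⟩
  set R₀ := 3 * |k| + 1
  calc ∫⁻ x in {x | |x| ≤ R}, ENNReal.ofReal (jap x ^ (-p))
      ≤ ∫⁻ x in (fun x => |x|) ⁻¹' Icc 0 R₀, ENNReal.ofReal (jap x ^ (-p)) :=
        lintegral_mono_set fun x (hx : |x| ≤ R) => ⟨abs_nonneg x, hx.trans hR⟩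
    _ ≤ 2 * ∫⁻ x in Icc 0 R₀, ENNReal.ofReal (jap x ^ (-p)) :=
        setLIntegral_preimage_abs_le (fun x => by rw [jap_neg]) _
    _ ≤ 2 * ENNReal.ofReal (2 ^ p * ∫ y in (1:ℝ)..(1 + R₀), y ^ (-p)) := by
        gcongr; exact setLIntegral_Icc_jap_rpow_neg_le hp (by positivity)
    _ ≤ 2 * ENNReal.ofReal (2 ^ p * (C * phiβ p k)) := by
        gcongr
        exact hint k _ (by linarith [abs_nonneg k]) (by linarith [abs_le_jap k, one_le_jap k])
    _ = ENNReal.ofReal (2 * 2 ^ p * C * phiβ p k) := by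
        rw [← ENNReal.ofReal_ofNat 2, ← ENNReal.ofReal_mul zero_le_two]; ring_nf

section Splitting

variable {β γ : ℝ}

lemma jap_rpow_neg_mul_jap_sub_rpow_neg_le_of_two_mul_abs_le (hγ : 0 ≤ γ) {τ k : ℝ}
    (h : 2 * |k| ≤ |τ|) :
    jap τ ^ (-β) * jap (τ - k) ^ (-γ) ≤ 2 ^ γ * jap τ ^ (-(β + γ)) := by
  calc jap τ ^ (-β) * jap (τ - k) ^ (-γ) ≤ jap τ ^ (-β) * (2 ^ γ * jap τ ^ (-γ)) := by
        gcongr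
        · exact rpow_nonneg (jap_pos τ).le _
        · exact rpow_neg_le_two_rpow_mul hγ (jap_pos τ) (jap_le_two_mul_jap_sub h)
    _ = 2 ^ γ * jap τ ^ (-(β + γ)) := by
        rw [mul_left_comm, ← rpow_add (jap_pos τ), neg_add]

lemma setLIntegral_abs_le_jap_mul_jap_sub_le (hγ : 0 ≤ γ) (hβγ : γ ≤ β) :
    ∃ C > 0, ∀ k : ℝ, ∫⁻ τ in {τ | |τ| ≤ 2 * |k| + 1},
      ENNReal.ofReal (jap τ ^ (-β) * jap (τ - k) ^ (-γ)) ≤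
        ENNReal.ofReal (C * jap k ^ (-γ) * phiβ β k) := by
  obtain ⟨C, hC, hball⟩ := setLIntegral_abs_le_jap_rpow_neg_le_phiβ (hγ.trans hβγ)
  refine ⟨2 ^ γ * (2 * C), by positivity, fun k => ?_⟩
  set S := {τ : ℝ | |τ| ≤ 2 * |k| + 1}
  set c := 2 ^ γ * jap k ^ (-γ)
  have hc : 0 ≤ c := by have := rpow_nonneg (jap_pos k).le (-γ); positivity
  have hpt : ∀ τ, ENNReal.ofReal (jap τ ^ (-β) * jap (τ - k) ^ (-γ)) ≤
      ENNReal.ofReal c * (ENNReal.ofReal (jap τ ^ (-β)) + ENNReal.ofReal (jap (τ - k) ^ (-β))) := by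
    intro τ
    rw [← ENNReal.ofReal_add (rpow_nonneg (jap_pos _).le _) (rpow_nonneg (jap_pos _).le _),
      ← ENNReal.ofReal_mul hc]
    exact ENNReal.ofReal_le_ofReal <| rpow_neg_mul_rpow_neg_le hγ hβγ (jap_pos k) (jap_pos τ)
      (jap_pos _) (jap_le_jap_add_jap_sub τ k)
  have hmeas : Measurable fun τ => ENNReal.ofReal (jap τ ^ (-β)) :=
    (continuous_jap.measurable.pow_const _).ennreal_ofReal
  have hshift : ∫⁻ τ in S, ENNReal.ofReal (jap (τ - k) ^ (-β)) ≤
      ∫⁻ x in {x | |x| ≤ 3 * |k| + 1}, ENNReal.ofReal (jap x ^ (-β)) := by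
    calc ∫⁻ τ in S, ENNReal.ofReal (jap (τ - k) ^ (-β))
        ≤ ∫⁻ τ in (fun τ => τ - k) ⁻¹' {x | |x| ≤ 3 * |k| + 1},
            ENNReal.ofReal (jap (τ - k) ^ (-β)) :=
          lintegral_mono_set fun τ (hτ : |τ| ≤ _) => show |τ - k| ≤ _ by
            linarith [abs_sub τ k]
      _ = _ := (measurePreserving_sub_right volume k).setLIntegral_comp_preimage_emb
            (MeasurableEquiv.subRight k).measurableEmbedding
            (fun x => ENNReal.ofReal (jap x ^ (-β))) _
  calc ∫⁻ τ in S, ENNReal.ofReal (jap τ ^ (-β) * jap (τ - k) ^ (-γ))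
      ≤ ∫⁻ τ in S, ENNReal.ofReal c *
          (ENNReal.ofReal (jap τ ^ (-β)) + ENNReal.ofReal (jap (τ - k) ^ (-β))) :=
        lintegral_mono hpt
    _ = ENNReal.ofReal c * ((∫⁻ τ in S, ENNReal.ofReal (jap τ ^ (-β))) +
          ∫⁻ τ in S, ENNReal.ofReal (jap (τ - k) ^ (-β))) := by
        rw [lintegral_const_mul' _ _ ENNReal.ofReal_ne_top, lintegral_add_left hmeas]
    _ ≤ ENNReal.ofReal c * (ENNReal.ofReal (C * phiβ β k) + ENNReal.ofReal (C * phiβ β k)) := by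
        gcongr
        exacts [hball k _ (by linarith [abs_nonneg k]), hshift.trans (hball k _ le_rfl)]
    _ = ENNReal.ofReal (2 ^ γ * (2 * C) * jap k ^ (-γ) * phiβ β k) := by
        have hCφ := (mul_pos hC (phiβ_pos β k)).le
        rw [← ENNReal.ofReal_add hCφ hCφ, ← ENNReal.ofReal_mul hc]
        congr 1; simp only [c]; ring

lemma setLIntegral_lt_abs_jap_mul_jap_sub_le (hγ : 0 ≤ γ) (hsum : 1 < β + γ) :
    ∃ C > 0, ∀ k : ℝ, ∫⁻ τ in {τ | 2 * |k| + 1 < |τ|},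
      ENNReal.ofReal (jap τ ^ (-β) * jap (τ - k) ^ (-γ)) ≤
        ENNReal.ofReal (C * jap k ^ (-γ) * phiβ β k) := by
  obtain ⟨C, hC, hφ⟩ := jap_rpow_one_sub_le_phiβ β
  have hp : 0 < β + γ - 1 := by linarith
  refine ⟨2 ^ γ * 2 * C / (β + γ - 1), by positivity, fun k => ?_⟩
  set R := 2 * |k| + 1
  have hR : 0 < R := by positivity
  have hpt : ∀ τ ∈ {τ | R < |τ|}, ENNReal.ofReal (jap τ ^ (-β) * jap (τ - k) ^ (-γ)) ≤
      ENNReal.ofReal (2 ^ γ) * ENNReal.ofReal (jap τ ^ (-(β + γ))) := by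
    intro τ (hτ : R < |τ|)
    rw [← ENNReal.ofReal_mul (by positivity)]
    exact ENNReal.ofReal_le_ofReal (jap_rpow_neg_mul_jap_sub_rpow_neg_le_of_two_mul_abs_le hγ (by linarith))
  have htail : ∫⁻ τ in {τ | R < |τ|}, ENNReal.ofReal (jap τ ^ (-(β + γ))) ≤
      2 * ENNReal.ofReal (R ^ (1 - (β + γ)) / (β + γ - 1)) :=
    (setLIntegral_preimage_abs_le (fun x => by rw [jap_neg]) (Ioi R)).trans <| by
      gcongr; exact setLIntegral_Ioi_jap_rpow_neg_le hsum hR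
  have hdecay : R ^ (1 - (β + γ)) ≤ C * jap k ^ (-γ) * phiβ β k := by
    calc R ^ (1 - (β + γ)) ≤ jap k ^ (1 - (β + γ)) :=
          rpow_le_rpow_of_nonpos (jap_pos k) (by linarith [jap_le_one_add_abs k, abs_nonneg k])
            (by linarith)
      _ = jap k ^ (-γ) * jap k ^ (1 - β) := by rw [← rpow_add (jap_pos k)]; ring_nf
      _ ≤ jap k ^ (-γ) * (C * phiβ β k) := by
          gcongr
          · exact rpow_nonneg (jap_pos k).le _
          · exact hφ k
      _ = C * jap k ^ (-γ) * phiβ β k := by ring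
  calc ∫⁻ τ in {τ | R < |τ|}, ENNReal.ofReal (jap τ ^ (-β) * jap (τ - k) ^ (-γ))
      ≤ ∫⁻ τ in {τ | R < |τ|}, ENNReal.ofReal (2 ^ γ) * ENNReal.ofReal (jap τ ^ (-(β + γ))) :=
        setLIntegral_mono' (measurableSet_lt measurable_const continuous_abs.measurable) hpt
    _ = ENNReal.ofReal (2 ^ γ) * ∫⁻ τ in {τ | R < |τ|}, ENNReal.ofReal (jap τ ^ (-(β + γ))) :=
        lintegral_const_mul' _ _ ENNReal.ofReal_ne_top
    _ ≤ ENNReal.ofReal (2 ^ γ) * (2 * ENNReal.ofReal (R ^ (1 - (β + γ)) / (β + γ - 1))) := by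
        gcongr
    _ ≤ ENNReal.ofReal (2 ^ γ) *
          (2 * ENNReal.ofReal (C * jap k ^ (-γ) * phiβ β k / (β + γ - 1))) := by
        gcongr
    _ = ENNReal.ofReal (2 ^ γ * 2 * C / (β + γ - 1) * jap k ^ (-γ) * phiβ β k) := by
        rw [← ENNReal.ofReal_ofNat 2, ← ENNReal.ofReal_mul zero_le_two,
          ← ENNReal.ofReal_mul (by positivity)]
        congr 1; ring

theorem lintegral_jap_mul_jap_sub_le (hγ : 0 ≤ γ) (hβγ : γ ≤ β) (hsum : 1 < β + γ) :
    ∃ C > 0, ∀ k : ℝ, ∫⁻ τ, ENNReal.ofReal (jap τ ^ (-β) * jap (τ - k) ^ (-γ)) ≤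
        ENNReal.ofReal (C * jap k ^ (-γ) * phiβ β k) := by
  obtain ⟨C₁, hC₁, hnear⟩ := setLIntegral_abs_le_jap_mul_jap_sub_le hγ hβγ
  obtain ⟨C₂, hC₂, hfar⟩ := setLIntegral_lt_abs_jap_mul_jap_sub_le hγ hsum
  refine ⟨C₁ + C₂, by positivity, fun k => ?_⟩
  have hS : MeasurableSet {τ : ℝ | |τ| ≤ 2 * |k| + 1} :=
    measurableSet_le continuous_abs.measurable measurable_const
  have hSc : {τ : ℝ | |τ| ≤ 2 * |k| + 1}ᶜ = {τ | 2 * |k| + 1 < |τ|} := by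
    ext τ; simp
  have hY : 0 ≤ jap k ^ (-γ) * phiβ β k :=
    mul_nonneg (rpow_nonneg (jap_pos k).le _) (phiβ_pos β k).le
  have hC₁Y := mul_nonneg hC₁.le hY
  have hC₂Y := mul_nonneg hC₂.le hY
  rw [← lintegral_add_compl _ hS, hSc]
  calc _ ≤ ENNReal.ofReal (C₁ * jap k ^ (-γ) * phiβ β k) +
        ENNReal.ofReal (C₂ * jap k ^ (-γ) * phiβ β k) := add_le_add (hnear k) (hfar k)
    _ = ENNReal.ofReal ((C₁ + C₂) * jap k ^ (-γ) * phiβ β k) := by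
        rw [mul_assoc, mul_assoc, ← ENNReal.ofReal_add hC₁Y hC₂Y]
        congr 1; ring

end Splitting

/-- Calculus lemma: for `β ≥ γ ≥ 0` with `β + γ > 1`,
`∫_ℝ ⟨τ − k₁⟩^{−β} ⟨τ − k₂⟩^{−γ} dτ ≲ ⟨k₁ − k₂⟩^{−γ} φ_β(k₁ − k₂)`. -/
theorem stmt0 (β γ : ℝ) (hγ : 0 ≤ γ) (hβγ : γ ≤ β) (hsum : 1 < β + γ) :
    ∃ C > (0:ℝ), ∀ k₁ k₂ : ℝ,
      ∫⁻ τ : ℝ, ENNReal.ofReal (jap (τ - k₁) ^ (-β) * jap (τ - k₂) ^ (-γ)) ≤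
        ENNReal.ofReal (C * jap (k₁ - k₂) ^ (-γ) * phiβ β (k₁ - k₂)) := by
  obtain ⟨C, hC, hbound⟩ := lintegral_jap_mul_jap_sub_le hγ hβγ hsum
  refine ⟨C, hC, fun k₁ k₂ => ?_⟩
  have hshift : ∫⁻ τ, ENNReal.ofReal (jap (τ - k₁) ^ (-β) * jap (τ - k₂) ^ (-γ)) =
      ∫⁻ τ, ENNReal.ofReal (jap τ ^ (-β) * jap (τ - (k₂ - k₁)) ^ (-γ)) := by
    rw [← lintegral_add_right_eq_self _ k₁]
    congr with τ
    ring_nf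
  rw [hshift, ← neg_sub k₂ k₁, jap_neg, phiβ_neg]
  exact hbound (k₂ - k₁)
end

section
/- For ξ ∈ ℝ, ξ ≠ 0, define the kernel K_ξ(θ,η) := (η/(η² + θ²)) · 1_{{η² + θ² < |ξ|}} for θ ∈ ℝ, η > 0. Then there exists a constant C > 0, independent of ξ, such that for every g ∈ L²(0,∞), ‖ ∫_0^∞ K_ξ(·,η) g(η) dη ‖_{L²_θ(ℝ)} ≤ C ‖g‖_{L²(0,∞)}. In particular, for every 0 < ε < 1 one has ∫_0^∞ K_ξ(θ,η) |η|^{−ε} dη ≲ |θ|^{−ε} and ∫_{−∞}^∞ K_ξ(θ,η) |θ|^{−ε} dθ ≲ |η|^{−ε}, uniformly in ξ. -/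
open MeasureTheory
open scoped ENNReal

/-- The low-frequency kernel `K_ξ(θ,η) = (η/(η² + θ²)) 1_{η² + θ² < |ξ|}`. -/
noncomputable def Kker (ξ θ η : ℝ) : ℝ :=
  if η ^ 2 + θ ^ 2 < |ξ| then η / (η ^ 2 + θ ^ 2) else 0

/-!
For `η > 0` the kernel is dominated by `η / (η² + θ²)`, hence both by `η / θ²` and by `1 / η`.
Splitting the weighted integrals at `|θ|` (resp. `η`) and using the first bound near `0` and the
second one far out gives the Schur estimates with the weight `|t|^(-ε)`, uniformly in `ξ`; both are
homogeneous of degree `-ε`. The `L²` bound is Schur's test with `ε = 1/2`: Cauchy–Schwarz against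
the weight in the inner integral, then Tonelli and the second Schur estimate.
-/

open Set Function

section Schur

variable {X Y : Type*} [MeasurableSpace X] [MeasurableSpace Y] {μ : Measure X} {ν : Measure Y}

theorem sq_lintegral_mul_le_mul_lintegral {k q f : Y → ℝ≥0∞} (hk : AEMeasurable k ν)
    (hq : AEMeasurable q ν) (hf : AEMeasurable f ν) (hq_ne_zero : ∀ᵐ y ∂ν, q y ≠ 0)
    (hq_ne_top : ∀ᵐ y ∂ν, q y ≠ ∞) :
    (∫⁻ y, k y * f y ∂ν) ^ 2 ≤ (∫⁻ y, k y * q y ∂ν) * ∫⁻ y, k y * (f y ^ 2 / q y) ∂ν := by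
  have h_split : ∀ᵐ y ∂ν,
      k y * f y = (k y * q y) ^ (1 / 2 : ℝ) * (k y * (f y ^ 2 / q y)) ^ (1 / 2 : ℝ) := by
    filter_upwards [hq_ne_zero, hq_ne_top] with y hy0 hytop
    rw [← ENNReal.mul_rpow_of_nonneg _ _ (by norm_num), div_eq_mul_inv,
      show k y * q y * (k y * (f y ^ 2 * (q y)⁻¹)) = (k y * f y) ^ 2 * (q y * (q y)⁻¹) by ring,
      ENNReal.mul_inv_cancel hy0 hytop, mul_one, ← ENNReal.rpow_two, ← ENNReal.rpow_mul]
    norm_num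
  have h_holder := ENNReal.lintegral_mul_norm_pow_le (hk.mul hq) (hk.mul ((hf.pow_const 2).div hq))
    (p := 1 / 2) (q := 1 / 2) (by norm_num) (by norm_num) (by norm_num)
  rw [lintegral_congr_ae h_split]
  calc (∫⁻ y, (k y * q y) ^ (1 / 2 : ℝ) * (k y * (f y ^ 2 / q y)) ^ (1 / 2 : ℝ) ∂ν) ^ 2
      ≤ ((∫⁻ y, k y * q y ∂ν) ^ (1 / 2 : ℝ) *
          (∫⁻ y, k y * (f y ^ 2 / q y) ∂ν) ^ (1 / 2 : ℝ)) ^ 2 := by gcongr; exact h_holder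
    _ = _ := by
      rw [mul_pow, ← ENNReal.rpow_natCast, ← ENNReal.rpow_natCast, ← ENNReal.rpow_mul,
        ← ENNReal.rpow_mul]
      norm_num

theorem lintegral_sq_lintegral_mul_le_of_schur [SFinite μ] [SFinite ν] {K : X → Y → ℝ≥0∞}
    (hK : Measurable (uncurry K)) {p : X → ℝ≥0∞} {q : Y → ℝ≥0∞} (hp : Measurable p)
    (hq : Measurable q) (hq_ne_zero : ∀ᵐ y ∂ν, q y ≠ 0) (hq_ne_top : ∀ᵐ y ∂ν, q y ≠ ∞)
    {A B : ℝ≥0∞} (hA : ∀ᵐ x ∂μ, ∫⁻ y, K x y * q y ∂ν ≤ A * p x)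
    (hB : ∀ᵐ y ∂ν, ∫⁻ x, K x y * p x ∂μ ≤ B * q y) {f : Y → ℝ≥0∞} (hf : AEMeasurable f ν) :
    ∫⁻ x, (∫⁻ y, K x y * f y ∂ν) ^ 2 ∂μ ≤ A * B * ∫⁻ y, f y ^ 2 ∂ν := by
  have hK_left (x : X) : Measurable (K x) := hK.comp measurable_prodMk_left
  have hh : AEMeasurable (fun y => f y ^ 2 / q y) ν := (hf.pow_const 2).div hq.aemeasurable
  calc ∫⁻ x, (∫⁻ y, K x y * f y ∂ν) ^ 2 ∂μ
      ≤ ∫⁻ x, A * p x * ∫⁻ y, K x y * (f y ^ 2 / q y) ∂ν ∂μ := by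
        refine lintegral_mono_ae ?_
        filter_upwards [hA] with x hx
        exact (sq_lintegral_mul_le_mul_lintegral (hK_left x).aemeasurable hq.aemeasurable hf
          hq_ne_zero hq_ne_top).trans (by gcongr)
    _ = A * ∫⁻ y, f y ^ 2 / q y * ∫⁻ x, K x y * p x ∂μ ∂ν := by
        have h_prod : AEMeasurable (uncurry fun x y => p x * (K x y * (f y ^ 2 / q y)))
            (μ.prod ν) :=
          (hp.comp measurable_fst).aemeasurable.mul (hK.aemeasurable.mul hh.comp_snd)
        have h_inner (x : X) : A * p x * ∫⁻ y, K x y * (f y ^ 2 / q y) ∂ν =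
            A * ∫⁻ y, p x * (K x y * (f y ^ 2 / q y)) ∂ν := by
          have : AEMeasurable (fun y => K x y * (f y ^ 2 / q y)) ν :=
            (hK_left x).aemeasurable.mul hh
          rw [mul_assoc, lintegral_const_mul'' _ this]
        simp_rw [h_inner]
        have h_outer : AEMeasurable (fun x => ∫⁻ y, p x * (K x y * (f y ^ 2 / q y)) ∂ν) μ :=
          h_prod.lintegral_prod_right'
        rw [lintegral_const_mul'' _ h_outer, lintegral_lintegral_swap h_prod]
        congr 1
        refine lintegral_congr fun y => ?_
        have hKp : AEMeasurable (fun x => K x y * p x) μ :=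
          ((hK.comp measurable_prodMk_right).mul hp).aemeasurable
        rw [← lintegral_const_mul'' _ hKp]
        congr 1 with x
        ring
    _ ≤ A * ∫⁻ y, f y ^ 2 / q y * (B * q y) ∂ν := by
        gcongr 1
        exact lintegral_mono_ae (hB.mono fun y hy => by gcongr)
    _ = A * B * ∫⁻ y, f y ^ 2 ∂ν := by
        rw [mul_assoc, ← lintegral_const_mul'' _ (hf.pow_const 2)]
        congr 1
        refine lintegral_congr_ae ?_
        filter_upwards [hq_ne_zero, hq_ne_top] with y hy0 hytop
        rw [mul_left_comm, ENNReal.div_mul_cancel hy0 hytop, mul_comm]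

theorem eLpNorm_two_pow_two (f : X → ℝ) : eLpNorm f 2 μ ^ 2 = ∫⁻ x, ‖f x‖ₑ ^ 2 ∂μ := by
  simpa using eLpNorm_nnreal_pow_eq_lintegral (μ := μ) (f := f) (p := 2) two_ne_zero

theorem eLpNorm_integral_mul_le_of_schur [SFinite μ] [SFinite ν] {K : X → Y → ℝ}
    (hK : Measurable (uncurry K)) {p : X → ℝ≥0∞} {q : Y → ℝ≥0∞} (hp : Measurable p)
    (hq : Measurable q) (hq_ne_zero : ∀ᵐ y ∂ν, q y ≠ 0) (hq_ne_top : ∀ᵐ y ∂ν, q y ≠ ∞)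
    {C : ℝ≥0∞} (hA : ∀ᵐ x ∂μ, ∫⁻ y, ‖K x y‖ₑ * q y ∂ν ≤ C * p x)
    (hB : ∀ᵐ y ∂ν, ∫⁻ x, ‖K x y‖ₑ * p x ∂μ ≤ C * q y) {g : Y → ℝ}
    (hg : AEStronglyMeasurable g ν) :
    eLpNorm (fun x => ∫ y, K x y * g y ∂ν) 2 μ ≤ C * eLpNorm g 2 ν := by
  have h_pointwise (x : X) : ‖∫ y, K x y * g y ∂ν‖ₑ ≤ ∫⁻ y, ‖K x y‖ₑ * ‖g y‖ₑ ∂ν := by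
    simpa only [enorm_mul] using enorm_integral_le_lintegral_enorm (fun y => K x y * g y)
  have h_schur := lintegral_sq_lintegral_mul_le_of_schur (μ := μ) (hK.enorm) hp hq hq_ne_zero
    hq_ne_top hA hB hg.enorm
  rw [← ENNReal.pow_le_pow_left_iff two_ne_zero, mul_pow, eLpNorm_two_pow_two,
    eLpNorm_two_pow_two, sq C]
  exact (lintegral_mono fun x => by gcongr; exact h_pointwise x).trans h_schur

end Schur

theorem lintegral_comp_abs (f : ℝ → ℝ≥0∞) : ∫⁻ x, f |x| = 2 * ∫⁻ x in Ioi 0, f x := by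
  have h_pos : ∫⁻ x in Ioi 0, f |x| = ∫⁻ x in Ioi 0, f x :=
    setLIntegral_congr_fun measurableSet_Ioi fun x hx => by rw [abs_of_pos hx]
  have h_neg : ∫⁻ x in Iic 0, f |x| = ∫⁻ x in Ioi 0, f x := by
    have := (Measure.measurePreserving_neg (volume : Measure ℝ)).setLIntegral_comp_preimage_emb
      (Homeomorph.neg ℝ).measurableEmbedding (fun x => f |x|) (Iic 0)
    simp only [abs_neg, neg_preimage, neg_Iic, neg_zero] at this
    rw [← this, Measure.restrict_congr_set Ioi_ae_eq_Ici.symm, h_pos]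
  rw [← lintegral_add_compl _ measurableSet_Iic, compl_Iic, h_neg, h_pos, two_mul]

theorem setLIntegral_Ioc_zero_rpow {a p : ℝ} (ha : 0 < a) (hp : -1 < p) :
    ∫⁻ x in Ioc 0 a, ENNReal.ofReal (x ^ p) = ENNReal.ofReal (a ^ (p + 1) / (p + 1)) := by
  have h_int : IntegrableOn (fun x : ℝ => x ^ p) (Ioc 0 a) :=
    (intervalIntegrable_iff_integrableOn_Ioc_of_le ha.le).1
      (intervalIntegral.intervalIntegrable_rpow' hp)
  rw [← ofReal_integral_eq_lintegral_ofReal h_int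
      ((ae_restrict_mem measurableSet_Ioc).mono fun x hx => Real.rpow_nonneg hx.1.le p),
    ← intervalIntegral.integral_of_le ha.le, integral_rpow (Or.inl hp),
    Real.zero_rpow (by linarith), sub_zero]

theorem setLIntegral_Ioi_rpow_of_lt {a r : ℝ} (ha : 0 < a) (hr : r < -1) :
    ∫⁻ x in Ioi a, ENNReal.ofReal (x ^ r) = ENNReal.ofReal (a ^ (r + 1) / -(r + 1)) := by
  rw [← ofReal_integral_eq_lintegral_ofReal (integrableOn_Ioi_rpow_of_lt hr ha)
      ((ae_restrict_mem measurableSet_Ioi).mono fun x hx => Real.rpow_nonneg (ha.trans hx).le r),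
    integral_Ioi_rpow_of_lt hr ha, div_neg, neg_div]

theorem setLIntegral_Ioi_zero_le_of_rpow_bounds {f : ℝ → ℝ} {a c d p r : ℝ} (ha : 0 < a)
    (hc : 0 ≤ c) (hd : 0 ≤ d) (hp : -1 < p) (hr : r < -1)
    (h_near : ∀ x ∈ Ioc 0 a, f x ≤ c * x ^ p) (h_far : ∀ x ∈ Ioi a, f x ≤ d * x ^ r) :
    ∫⁻ x in Ioi 0, ENNReal.ofReal (f x) ≤
      ENNReal.ofReal (c * (a ^ (p + 1) / (p + 1)) + d * (a ^ (r + 1) / -(r + 1))) := by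
  have h_near_int : ∫⁻ x in Ioc 0 a, ENNReal.ofReal (f x) ≤
      ENNReal.ofReal c * ENNReal.ofReal (a ^ (p + 1) / (p + 1)) := by
    rw [← setLIntegral_Ioc_zero_rpow ha hp, ← lintegral_const_mul' _ _ ENNReal.ofReal_ne_top]
    refine setLIntegral_mono' measurableSet_Ioc fun x hx => ?_
    rw [← ENNReal.ofReal_mul hc]
    exact ENNReal.ofReal_le_ofReal (h_near x hx)
  have h_far_int : ∫⁻ x in Ioi a, ENNReal.ofReal (f x) ≤
      ENNReal.ofReal d * ENNReal.ofReal (a ^ (r + 1) / -(r + 1)) := by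
    rw [← setLIntegral_Ioi_rpow_of_lt ha hr, ← lintegral_const_mul' _ _ ENNReal.ofReal_ne_top]
    refine setLIntegral_mono' measurableSet_Ioi fun x hx => ?_
    rw [← ENNReal.ofReal_mul hd]
    exact ENNReal.ofReal_le_ofReal (h_far x hx)
  have h_near_nonneg : 0 ≤ a ^ (p + 1) / (p + 1) :=
    div_nonneg (Real.rpow_nonneg ha.le _) (by linarith)
  have h_far_nonneg : 0 ≤ a ^ (r + 1) / -(r + 1) :=
    div_nonneg (Real.rpow_nonneg ha.le _) (by linarith)
  rw [ENNReal.ofReal_add (by positivity) (by positivity), ENNReal.ofReal_mul hc,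
    ENNReal.ofReal_mul hd, ← Ioc_union_Ioi_eq_Ioi ha.le]
  exact (lintegral_union_le _ _ _).trans (add_le_add h_near_int h_far_int)

section Kernel

variable {ξ θ η : ℝ}

theorem Kker_nonneg (hη : 0 ≤ η) : 0 ≤ Kker ξ θ η := by
  unfold Kker; split_ifs <;> positivity

theorem Kker_le (hη : 0 ≤ η) : Kker ξ θ η ≤ η / (η ^ 2 + θ ^ 2) := by
  unfold Kker; split_ifs
  exacts [le_rfl, by positivity]

theorem Kker_le_inv (hη : 0 < η) : Kker ξ θ η ≤ η⁻¹ := by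
  refine (Kker_le hη.le).trans ?_
  rw [div_le_iff₀ (by positivity), inv_mul_eq_div, le_div_iff₀ hη]
  nlinarith

theorem Kker_le_div_sq (hθ : θ ≠ 0) (hη : 0 ≤ η) : Kker ξ θ η ≤ η / θ ^ 2 :=
  (Kker_le hη).trans (div_le_div_of_nonneg_left hη (by positivity) (by nlinarith))

theorem Kker_abs : Kker ξ |θ| η = Kker ξ θ η := by
  simp only [Kker, sq_abs]

theorem setLIntegral_Ioi_Kker_mul_rpow_le {ε : ℝ} (hε₀ : 0 < ε) (hε₂ : ε < 2) (hθ : θ ≠ 0) :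
    ∫⁻ η in Ioi 0, ENNReal.ofReal (Kker ξ θ η * |η| ^ (-ε)) ≤
      ENNReal.ofReal ((1 / ε + 1 / (2 - ε)) * |θ| ^ (-ε)) := by
  have ha : 0 < |θ| := abs_pos.2 hθ
  refine (setLIntegral_Ioi_zero_le_of_rpow_bounds ha (c := (|θ| ^ 2)⁻¹) (d := 1) (p := 1 - ε)
    (r := -1 - ε) (by positivity) zero_le_one (by linarith) (by linarith) ?_ ?_).trans_eq ?_
  · intro η ⟨hη, _⟩
    rw [abs_of_pos hη, sub_eq_add_neg, Real.rpow_add hη, Real.rpow_one, sq_abs, ← mul_assoc,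
      inv_mul_eq_div]
    gcongr
    exact Kker_le_div_sq hθ hη.le
  · intro η hη
    have hη : 0 < η := ha.trans hη
    rw [abs_of_pos hη, sub_eq_add_neg, Real.rpow_add hη, Real.rpow_neg_one, one_mul]
    gcongr
    exact Kker_le_inv hη
  · congr 1
    have h_pow : |θ| ^ (1 - ε + 1) = |θ| ^ 2 * |θ| ^ (-ε) := by
      rw [← Real.rpow_two, ← Real.rpow_add ha]; ring_nf
    rw [h_pow, show 1 - ε + 1 = 2 - ε by ring, show -1 - ε + 1 = -ε by ring, neg_neg]
    have : 0 < 2 - ε := by linarith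
    field_simp
    ring

theorem lintegral_Kker_mul_rpow_le {ε : ℝ} (hε₀ : -1 < ε) (hε₁ : ε < 1) (hη : 0 < η) :
    ∫⁻ θ, ENNReal.ofReal (Kker ξ θ η * |θ| ^ (-ε)) ≤
      ENNReal.ofReal (2 * (1 / (1 - ε) + 1 / (1 + ε)) * |η| ^ (-ε)) := by
  have h_even := lintegral_comp_abs fun θ => ENNReal.ofReal (Kker ξ θ η * θ ^ (-ε))
  simp only [Kker_abs] at h_even
  rw [h_even, mul_assoc, ENNReal.ofReal_mul zero_le_two, ENNReal.ofReal_ofNat]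
  gcongr
  refine (setLIntegral_Ioi_zero_le_of_rpow_bounds hη (c := η⁻¹) (d := η) (p := -ε)
    (r := -2 - ε) (by positivity) hη.le (by linarith) (by linarith) ?_ ?_).trans_eq ?_
  · intro θ ⟨hθ, _⟩
    gcongr
    exact Kker_le_inv hη
  · intro θ hθ
    have hθ : 0 < θ := hη.trans hθ
    rw [sub_eq_add_neg, Real.rpow_add hθ, ← mul_assoc]
    gcongr
    refine (Kker_le_div_sq hθ.ne' hη.le).trans_eq ?_
    rw [Real.rpow_neg hθ.le, Real.rpow_two, div_eq_mul_inv]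
  · congr 1
    have h_near : η ^ (-ε + 1) = η * η ^ (-ε) := by
      rw [Real.rpow_add hη, Real.rpow_one, mul_comm]
    have h_far : η ^ (-2 - ε + 1) = η⁻¹ * η ^ (-ε) := by
      rw [← Real.rpow_neg_one, ← Real.rpow_add hη]; ring_nf
    rw [abs_of_pos hη, h_near, h_far, show -ε + 1 = 1 - ε by ring,
      show -(-2 - ε + 1) = 1 + ε by ring]
    have : 0 < 1 - ε := by linarith
    have : 0 < 1 + ε := by linarith
    field_simp

theorem measurable_uncurry_Kker (ξ : ℝ) : Measurable (uncurry (Kker ξ)) :=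
  Measurable.ite (measurableSet_lt (by fun_prop) measurable_const) (by fun_prop) measurable_const

theorem enorm_Kker_mul_ofReal (hη : 0 ≤ η) (w : ℝ) :
    ‖Kker ξ θ η‖ₑ * ENNReal.ofReal w = ENNReal.ofReal (Kker ξ θ η * w) := by
  rw [Real.enorm_eq_ofReal (Kker_nonneg hη), ENNReal.ofReal_mul (Kker_nonneg hη)]

end Kernel

/-- The operator `g ↦ ∫_0^∞ K_ξ(·,η) g(η) dη` is bounded from `L²(0,∞)` to `L²(ℝ)`
uniformly in `ξ ≠ 0`; moreover for every `0 < ε < 1` the Schur-test bounds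
`∫_0^∞ K_ξ(θ,η) |η|^{−ε} dη ≲ |θ|^{−ε}` and `∫_ℝ K_ξ(θ,η) |θ|^{−ε} dθ ≲ |η|^{−ε}`
hold uniformly in `ξ`. -/
theorem stmt9 :
    (∃ C > (0:ℝ), ∀ ξ : ℝ, ξ ≠ 0 → ∀ g : ℝ → ℝ,
      MemLp g 2 (volume.restrict (Set.Ioi 0)) →
      eLpNorm (fun θ : ℝ => ∫ η in Set.Ioi (0:ℝ), Kker ξ θ η * g η) 2 volume ≤
        ENNReal.ofReal C * eLpNorm g 2 (volume.restrict (Set.Ioi 0))) ∧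
    (∀ ε : ℝ, 0 < ε → ε < 1 → ∃ C' > (0:ℝ), ∀ ξ : ℝ, ξ ≠ 0 →
      (∀ θ : ℝ, θ ≠ 0 →
        ∫⁻ η in Set.Ioi (0:ℝ), ENNReal.ofReal (Kker ξ θ η * |η| ^ (-ε)) ≤
          ENNReal.ofReal (C' * |θ| ^ (-ε))) ∧
      (∀ η : ℝ, 0 < η →
        ∫⁻ θ : ℝ, ENNReal.ofReal (Kker ξ θ η * |θ| ^ (-ε)) ≤
          ENNReal.ofReal (C' * |η| ^ (-ε)))) := by
  have h_weight : Measurable fun t : ℝ => ENNReal.ofReal (|t| ^ (-(1 / 2) : ℝ)) := by fun_prop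
  -- the two Schur constants at `ε = 1/2` are `8/3` and `16/3`
  refine ⟨⟨16 / 3, by norm_num, fun ξ _ g hg => ?_⟩, fun ε hε₀ hε₁ => ?_⟩
  · refine eLpNorm_integral_mul_le_of_schur (measurable_uncurry_Kker ξ) h_weight h_weight
      ((ae_restrict_mem measurableSet_Ioi).mono fun η (hη : 0 < η) =>
        (ENNReal.ofReal_pos.2 (Real.rpow_pos_of_pos (abs_pos.2 hη.ne') _)).ne')
      (ae_of_all _ fun _ => ENNReal.ofReal_ne_top) ?_ ?_ hg.1
    · filter_upwards [Measure.ae_ne volume 0] with θ hθ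
      rw [setLIntegral_congr_fun measurableSet_Ioi fun η hη => enorm_Kker_mul_ofReal hη.le _,
        ← ENNReal.ofReal_mul (by norm_num)]
      refine (setLIntegral_Ioi_Kker_mul_rpow_le (by norm_num) (by norm_num) hθ).trans ?_
      gcongr
      norm_num
    · filter_upwards [ae_restrict_mem measurableSet_Ioi] with η hη
      simp_rw [enorm_Kker_mul_ofReal hη.le]
      rw [← ENNReal.ofReal_mul (by norm_num)]
      refine (lintegral_Kker_mul_rpow_le (by norm_num) (by norm_num) hη).trans ?_
      gcongr
      norm_num
  · have hc₁ : 0 < 1 / ε + 1 / (2 - ε) :=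
      add_pos (one_div_pos.2 hε₀) (one_div_pos.2 (by linarith))
    have hc₂ : 0 < 2 * (1 / (1 - ε) + 1 / (1 + ε)) :=
      mul_pos two_pos (add_pos (one_div_pos.2 (by linarith)) (one_div_pos.2 (by linarith)))
    refine ⟨_, add_pos hc₁ hc₂, fun ξ _ => ⟨fun θ hθ => ?_, fun η hη => ?_⟩⟩
    · refine (setLIntegral_Ioi_Kker_mul_rpow_le hε₀ (by linarith) hθ).trans ?_
      exact ENNReal.ofReal_le_ofReal
        (mul_le_mul_of_nonneg_right (le_add_of_nonneg_right hc₂.le) (by positivity))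
    · refine (lintegral_Kker_mul_rpow_le (by linarith) hε₁ hη).trans ?_
      exact ENNReal.ofReal_le_ofReal
        (mul_le_mul_of_nonneg_right (le_add_of_nonneg_left hc₁.le) (by positivity))
end
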